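/- Fix r ≥ 1. For each r-tuple (m_1,…,m_r) of positive integers, let G_{m_1,…,m_r} be any subgroup with A_{m_1}×⋯×A_{m_r} ⊴ G_{m_1,…,m_r} ≤ S_{m_1}×⋯×S_{m_r}, acting on [m_1]×⋯×[m_r] via the product action (x_1,…,x_r)(g_1,…,g_r) = (x_1g_1,…,x_rg_r). Then δ(G_{m_1,…,m_r}) → 1 − (1 − e^{−1})^r as m_1,…,m_r → ∞ (i.e., as min(m_1,…,m_r) → ∞). -/

import Mathlib

/-!
Among the permutations of `[n]` of a fixed sign `ε`, the proportion of derangements tends to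
`e⁻¹`. Indeed `2 · [sign σ = ε] = 1 + ε · sign σ`, so twice the number of derangements of sign `ε`
is `D_n + ε ∑_σ sign σ`, the sum running over derangements; by the Leibniz formula that sum is
`det (J - I) = (-1)ⁿ (1 - n)`, which is negligible against `n!`.

Since `G` contains `A_{m₁} × ⋯ × A_{mᵣ}`, membership in `G` depends only on the vector of
coordinate signs, so `G` is a disjoint union of products of sign classes. An element of `G` has a
fixed point in the product action iff each coordinate has a fixed point, and on a product of sign
classes the proportion of such elements is the product of the coordinate proportions, each of
which tends to `1 - e⁻¹`.
-/
open Equiv Finset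

/-- The number of fixed points of a permutation. -/
noncomputable def fixCnt {X : Type*} (g : Equiv.Perm X) : ℕ := {x | g x = x}.ncard

/-- The proportion of elements `a` of the set `C` such that the permutation `f a`
has exactly `k` fixed points. -/
noncomputable def propFixVia {α X : Type*} (f : α → Equiv.Perm X) (C : Set α) (k : ℕ) : ℝ :=
  (({a ∈ C | fixCnt (f a) = k}).ncard : ℝ) / (C.ncard : ℝ)

/-- `δ_k(C)`: the proportion of elements of `C ⊆ Sym(X)` with exactly `k` fixed points. -/
noncomputable def propFix {X : Type*} (C : Set (Equiv.Perm X)) (k : ℕ) : ℝ :=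
  propFixVia id C k

/-- The element `(α, b)` of the wreath product acting on `X × Y` via the imprimitive
action `(x, y) ↦ (x α(y), y b)`. -/
def imprimPerm {X Y : Type*} (α : Y → Equiv.Perm X) (b : Equiv.Perm Y) :
    Equiv.Perm (X × Y) where
  toFun p := (α p.2 p.1, b p.2)
  invFun p := ((α (b⁻¹ p.2))⁻¹ p.1, b⁻¹ p.2)
  left_inv p := by simp
  right_inv p := by simp

/-- The element `(α, b)` of the wreath product acting on `X^Y` via the power action
`(ω(α,b))(y) = ω(y b⁻¹) α(y b⁻¹)`. -/
def powerPerm {X Y : Type*} (α : Y → Equiv.Perm X) (b : Equiv.Perm Y) :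
    Equiv.Perm (Y → X) where
  toFun ω y := α (b⁻¹ y) (ω (b⁻¹ y))
  invFun ω y := (α y)⁻¹ (ω (b y))
  left_inv ω := by funext y; simp
  right_inv ω := by funext y; simp

/-- The number of cycles of a permutation in its disjoint cycle decomposition,
where fixed points are counted as 1-cycles. -/
noncomputable def cycleCnt {Y : Type*} [Fintype Y] [DecidableEq Y] (b : Equiv.Perm Y) : ℕ :=
  b.cycleType.card + fixCnt b

/-- The underlying set of the wreath product `A ≀ B` (pairs `(α, b)`). -/
def wreathSet {m n : ℕ} (A : Subgroup (Equiv.Perm (Fin m))) (B : Subgroup (Equiv.Perm (Fin n))) :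
    Set ((Fin n → Equiv.Perm (Fin m)) × Equiv.Perm (Fin n)) :=
  {p | (∀ y, p.1 y ∈ A) ∧ p.2 ∈ B}

/-- `δ_k(A ≀_I B)` for the imprimitive action on `[m] × [n]`. -/
noncomputable def deltaI {m n : ℕ} (A : Subgroup (Equiv.Perm (Fin m)))
    (B : Subgroup (Equiv.Perm (Fin n))) (k : ℕ) : ℝ :=
  propFixVia (fun p => imprimPerm p.1 p.2) (wreathSet A B) k

/-- `δ_k(A ≀_P B)` for the power action on `[m]^[n]`. -/
noncomputable def deltaP {m n : ℕ} (A : Subgroup (Equiv.Perm (Fin m)))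
    (B : Subgroup (Equiv.Perm (Fin n))) (k : ℕ) : ℝ :=
  propFixVia (fun p => powerPerm p.1 p.2) (wreathSet A B) k

/-- `[B, ℓ]`: the number of elements of `B` with exactly `ℓ` cycles. -/
noncomputable def stirCnt {n : ℕ} (B : Subgroup (Equiv.Perm (Fin n))) (ℓ : ℕ) : ℕ :=
  {b ∈ (B : Set (Equiv.Perm (Fin n))) | cycleCnt b = ℓ}.ncard

/-- A subgroup `A ≤ Sym(X)` is primitive if it is transitive and every block is trivial
(equivalently, it preserves no nontrivial partition of `X`). -/
def IsPrimitiveSubgroup {X : Type*} (A : Subgroup (Equiv.Perm X)) : Prop :=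
  MulAction.IsPretransitive A X ∧
  ∀ s : Set X, MulAction.IsBlock A s → s.Subsingleton ∨ s = Set.univ

open Filter Topology

lemma Matrix.det_of_ite_eq_zero_one (α : Type*) [Fintype α] [DecidableEq α] :
    (Matrix.of fun i j : α => if i = j then (0 : ℤ) else 1).det
      = (-1) ^ Fintype.card α * (1 - Fintype.card α) := by
  have h : (Matrix.of fun i j : α => if i = j then (0 : ℤ) else 1)
      = -(1 + Matrix.replicateCol Unit (fun _ : α => (-1 : ℤ)) *
          Matrix.replicateRow Unit (fun _ : α => (1 : ℤ))) := by
    ext i j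
    by_cases h : i = j <;> simp [Matrix.mul_apply, h]
  rw [h, Matrix.det_neg, Matrix.det_one_add_replicateCol_mul_replicateRow]
  simp [dotProduct]
  ring

namespace Equiv.Perm

variable {α : Type*} [Fintype α] [DecidableEq α]

lemma two_mul_card_filter_sign_eq (s : Finset (Perm α)) (ε : ℤˣ) :
    (2 * #{σ ∈ s | sign σ = ε} : ℤ) = #s + ε * ∑ σ ∈ s, (sign σ : ℤ) := by
  rw [natCast_card_filter, card_eq_sum_ones, Nat.cast_sum, mul_sum, mul_sum, ← sum_add_distrib]
  refine sum_congr rfl fun σ _ => ?_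
  rcases Int.units_eq_one_or (sign σ) with h | h <;> rcases Int.units_eq_one_or ε with rfl | rfl <;>
    simp [h]

lemma sum_sign_eq_zero [Nontrivial α] : ∑ σ : Perm α, (sign σ : ℤ) = 0 := by
  obtain ⟨a, b, hab⟩ := exists_pair_ne α
  have h := Equiv.sum_comp (Equiv.mulLeft (swap a b)) fun σ => (sign σ : ℤ)
  simp only [coe_mulLeft, sign_mul, sign_swap hab, Units.val_neg, neg_one_mul,
    sum_neg_distrib] at h
  omega

lemma sum_sign_derangements :
    ∑ σ with σ ∈ derangements α, (sign σ : ℤ) = (-1) ^ Fintype.card α * (1 - Fintype.card α) := by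
  rw [← Matrix.det_of_ite_eq_zero_one, Matrix.det_apply, sum_filter]
  refine sum_congr rfl fun σ _ => ?_
  split_ifs with h
  · rw [prod_eq_one fun i _ => by simp [h i], Units.smul_def, zsmul_one]; rfl
  · obtain ⟨x, hx⟩ := not_forall_not.mp h
    rw [prod_eq_zero (mem_univ x) (by simp [hx]), smul_zero]

lemma two_mul_card_sign_eq [Nontrivial α] (ε : ℤˣ) :
    (2 * #{σ : Perm α | sign σ = ε} : ℤ) = (Fintype.card α).factorial := by
  rw [two_mul_card_filter_sign_eq, sum_sign_eq_zero, mul_zero, add_zero, card_univ,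
    Fintype.card_perm]

lemma two_mul_card_sign_eq_not_mem_derangements [Nontrivial α] (ε : ℤˣ) :
    (2 * #{σ : Perm α | sign σ = ε ∧ σ ∉ derangements α} : ℤ) =
      (Fintype.card α).factorial - numDerangements (Fintype.card α)
        - ε * ((-1) ^ Fintype.card α * (1 - Fintype.card α)) := by
  have hcard : #{σ : Perm α | σ ∉ derangements α} + numDerangements (Fintype.card α)
      = (Fintype.card α).factorial := by
    rw [← card_derangements_eq_numDerangements, Fintype.card_subtype, add_comm,
      card_filter_add_card_filter_not, card_univ, Fintype.card_perm]
  have hsum : ∑ σ with σ ∉ derangements α, (sign σ : ℤ)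
      = -((-1) ^ Fintype.card α * (1 - Fintype.card α)) := by
    rw [← sum_sign_derangements, eq_neg_iff_add_eq_zero, add_comm, sum_filter_add_sum_filter_not,
      sum_sign_eq_zero]
  simp_rw [and_comm (a := sign _ = ε), ← filter_filter, two_mul_card_filter_sign_eq, hsum]
  push_cast [← hcard]
  ring

end Equiv.Perm

lemma fixCnt_eq_zero_iff {X : Type*} [Finite X] (g : Perm X) :
    fixCnt g = 0 ↔ g ∈ derangements X := by
  rw [fixCnt, Set.ncard_eq_zero, Set.eq_empty_iff_forall_notMem]
  rfl

lemma Equiv.piCongrRight_mem_derangements_iff {ι : Type*} {β : ι → Type*} (g : ∀ i, Perm (β i)) :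
    piCongrRight g ∈ derangements (∀ i, β i) ↔ ∃ i, g i ∈ derangements (β i) := by
  simp only [derangements, Set.mem_ofPred_eq, ne_eq, ← not_exists, ← not_forall, not_iff_not,
    funext_iff, piCongrRight_apply, Pi.map_apply]
  exact (Classical.skolem (p := fun i y => g i y = y)).symm

open Nat in
lemma tendsto_neg_one_pow_mul_one_sub_div_factorial :
    Tendsto (fun n : ℕ => (-1) ^ n * (1 - n) / (n ! : ℝ)) atTop (𝓝 0) := by
  have h := (FloorSemiring.tendsto_mul_pow_div_factorial_sub_atTop (1 : ℝ) (-1) 0).sub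
    (FloorSemiring.tendsto_mul_pow_div_factorial_sub_atTop (1 : ℝ) (-1) 1)
  rw [sub_zero] at h
  refine h.congr' ?_
  filter_upwards [eventually_ge_atTop 1] with n hn
  obtain ⟨k, rfl⟩ := Nat.exists_eq_add_of_le' hn
  rw [Nat.add_sub_cancel, Nat.sub_zero, factorial_succ]
  push_cast
  field_simp

open Perm

noncomputable def fixedPointProportion (n : ℕ) (ε : ℤˣ) : ℝ :=
  #{σ : Perm (Fin n) | sign σ = ε ∧ σ ∉ derangements (Fin n)} / #{σ : Perm (Fin n) | sign σ = ε}

lemma fixedPointProportion_nonneg (n : ℕ) (ε : ℤˣ) : 0 ≤ fixedPointProportion n ε := by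
  unfold fixedPointProportion
  positivity

lemma min_fixedPointProportion_le (n : ℕ) (ε : ℤˣ) :
    min (fixedPointProportion n 1) (fixedPointProportion n (-1)) ≤ fixedPointProportion n ε := by
  rcases Int.units_eq_one_or ε with rfl | rfl
  exacts [min_le_left _ _, min_le_right _ _]

lemma fixedPointProportion_le_max (n : ℕ) (ε : ℤˣ) :
    fixedPointProportion n ε ≤ max (fixedPointProportion n 1) (fixedPointProportion n (-1)) := by
  rcases Int.units_eq_one_or ε with rfl | rfl
  exacts [le_max_left _ _, le_max_right _ _]

lemma fixedPointProportion_mul_card (n : ℕ) (ε : ℤˣ) :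
    fixedPointProportion n ε * #{σ : Perm (Fin n) | sign σ = ε} =
      #{σ : Perm (Fin n) | sign σ = ε ∧ σ ∉ derangements (Fin n)} := by
  refine div_mul_cancel_of_imp fun h => ?_
  rw [Nat.cast_eq_zero, card_eq_zero, filter_eq_empty_iff] at h ⊢
  exact fun σ _ hσ => h (mem_univ σ) hσ.1

open Nat in
lemma fixedPointProportion_eq {n : ℕ} (hn : 2 ≤ n) (ε : ℤˣ) :
    fixedPointProportion n ε =
      1 - numDerangements n / (n ! : ℝ) - ε * ((-1) ^ n * (1 - n) / n !) := by
  have : Nontrivial (Fin n) := Fin.nontrivial_iff_two_le.mpr hn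
  have hall := two_mul_card_sign_eq (α := Fin n) ε
  have hfix := two_mul_card_sign_eq_not_mem_derangements (α := Fin n) ε
  rw [Fintype.card_fin] at hall hfix
  have hall' : (2 * #{σ : Perm (Fin n) | sign σ = ε} : ℝ) = n ! := by exact_mod_cast hall
  have hfix' : (2 * #{σ : Perm (Fin n) | sign σ = ε ∧ σ ∉ derangements (Fin n)} : ℝ) =
      (n ! : ℝ) - numDerangements n - ε * ((-1) ^ n * (1 - n)) := by exact_mod_cast hfix
  rw [fixedPointProportion, ← mul_div_mul_left _ _ two_ne_zero, hall', hfix']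
  field_simp

lemma tendsto_fixedPointProportion (ε : ℤˣ) :
    Tendsto (fixedPointProportion · ε) atTop (𝓝 (1 - Real.exp (-1))) := by
  have h := (tendsto_const_nhds (x := (1 : ℝ))).sub numDerangements_tendsto_inv_e |>.sub
    (tendsto_neg_one_pow_mul_one_sub_div_factorial.const_mul (ε : ℝ))
  rw [mul_zero, sub_zero] at h
  exact h.congr' <| (eventually_ge_atTop 2).mono fun n hn => (fixedPointProportion_eq hn ε).symm

section PiFiber

variable {ι : Type*} [Fintype ι] [DecidableEq ι] {π β : ι → Type*} [∀ i, Fintype (π i)]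
  [∀ i, DecidableEq (β i)] (f : ∀ i, π i → β i) (S : Finset (∀ i, β i))

lemma card_filter_pi_eq_sum_prod (Q : ∀ i, π i → Prop) [∀ i, DecidablePred (Q i)] :
    #{g : ∀ i, π i | (fun i => f i (g i)) ∈ S ∧ ∀ i, Q i (g i)} =
      ∑ b ∈ S, ∏ i, #{x : π i | f i x = b i ∧ Q i x} := by
  rw [card_eq_sum_card_fiberwise (f := fun g i => f i (g i)) (t := S)
    fun g hg => (mem_filter.1 hg).2.1]
  refine sum_congr rfl fun b hb => ?_
  rw [← Fintype.card_piFinset]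
  congr 1
  ext g
  simp only [mem_filter, mem_univ, true_and, Fintype.mem_piFinset, funext_iff]
  constructor
  · rintro ⟨⟨-, hQ⟩, hf⟩ i
    exact ⟨hf i, hQ i⟩
  · intro h
    refine ⟨⟨?_, fun i => (h i).2⟩, fun i => (h i).1⟩
    convert hb using 1
    exact funext fun i => (h i).1

lemma card_filter_pi_eq_sum_prod_card :
    #{g : ∀ i, π i | (fun i => f i (g i)) ∈ S} = ∑ b ∈ S, ∏ i, #{x : π i | f i x = b i} := by
  simpa using card_filter_pi_eq_sum_prod f S fun _ _ => True

variable (Q : ∀ i, π i → Prop) [∀ i, DecidablePred (Q i)]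

lemma prod_mul_card_le_card_filter_pi (c : ι → ℝ) (hc : ∀ i, 0 ≤ c i)
    (h : ∀ i b, c i * #{x : π i | f i x = b} ≤ #{x : π i | f i x = b ∧ Q i x}) :
    (∏ i, c i) * #{g : ∀ i, π i | (fun i => f i (g i)) ∈ S} ≤
      #{g : ∀ i, π i | (fun i => f i (g i)) ∈ S ∧ ∀ i, Q i (g i)} := by
  rw [card_filter_pi_eq_sum_prod, card_filter_pi_eq_sum_prod_card]
  push_cast
  rw [mul_sum]
  gcongr with b
  rw [← prod_mul_distrib]
  exact prod_le_prod (fun i _ => mul_nonneg (hc i) (Nat.cast_nonneg _)) fun i _ => h i (b i)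

lemma card_filter_pi_le_prod_mul_card (c : ι → ℝ)
    (h : ∀ i b, #{x : π i | f i x = b ∧ Q i x} ≤ c i * #{x : π i | f i x = b}) :
    #{g : ∀ i, π i | (fun i => f i (g i)) ∈ S ∧ ∀ i, Q i (g i)} ≤
      (∏ i, c i) * #{g : ∀ i, π i | (fun i => f i (g i)) ∈ S} := by
  rw [card_filter_pi_eq_sum_prod, card_filter_pi_eq_sum_prod_card]
  push_cast
  rw [mul_sum]
  gcongr with b
  rw [← prod_mul_distrib]
  exact prod_le_prod (fun i _ => Nat.cast_nonneg _) fun i _ => h i (b i)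

end PiFiber

lemma exists_finset_sign_mem_iff {ι : Type*} [Fintype ι] [DecidableEq ι] {α : ι → Type*}
    [∀ i, Fintype (α i)] [∀ i, DecidableEq (α i)] {G : Subgroup (∀ i, Perm (α i))}
    (hG : Subgroup.pi Set.univ (fun i => alternatingGroup (α i)) ≤ G) :
    ∃ S : Finset (ι → ℤˣ), ∀ g, (fun i => sign (g i)) ∈ S ↔ g ∈ G := by
  classical
  refine ⟨(univ.filter (· ∈ G)).image fun g i => sign (g i), fun g =>
    ⟨fun h => ?_, fun h => mem_image_of_mem _ (mem_filter.2 ⟨mem_univ _, h⟩)⟩⟩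
  obtain ⟨t, ht, hts⟩ := mem_image.1 h
  have : t⁻¹ * g ∈ G := hG fun i _ => by simp [mem_alternatingGroup, congrFun hts i]
  simpa using mul_mem (mem_filter.1 ht).2 this

lemma propFixVia_piCongrRight_zero {ι : Type*} [Fintype ι] [DecidableEq ι] {α : ι → Type*}
    [∀ i, Fintype (α i)] [∀ i, DecidableEq (α i)] (G : Subgroup (∀ i, Perm (α i)))
    [DecidablePred (· ∈ G)] :
    propFixVia (fun c => piCongrRight c) (G : Set (∀ i, Perm (α i))) 0 =
      1 - #{g | g ∈ G ∧ ∀ i, g i ∉ derangements (α i)} / #{g | g ∈ G} := by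
  have hpos : (0 : ℝ) < #{g | g ∈ G} := Nat.cast_pos.2 (card_pos.2 ⟨1, by simp [G.one_mem]⟩)
  have hsplit := card_filter_add_card_filter_not (s := {g | g ∈ G})
    fun g => ∀ i, g i ∉ derangements (α i)
  have hfix : {a ∈ (G : Set (∀ i, Perm (α i))) | fixCnt (piCongrRight a) = 0}.ncard =
      #{g | g ∈ G ∧ ¬∀ i, g i ∉ derangements (α i)} := by
    rw [Set.ncard_eq_toFinset_card']
    congr 1
    ext g
    simp [fixCnt_eq_zero_iff, piCongrRight_mem_derangements_iff]
  have hG : (G : Set (∀ i, Perm (α i))).ncard = #{g | g ∈ G} := by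
    rw [Set.ncard_eq_toFinset_card']
    congr 1
    ext g
    simp
  rw [filter_filter, filter_filter] at hsplit
  rw [propFixVia, hfix, hG, eq_sub_iff_add_eq, ← add_div, ← Nat.cast_add, add_comm, hsplit,
    div_self hpos.ne']

lemma propFixVia_piCongrRight_zero_mem_Icc {ι : Type*} [Fintype ι] [DecidableEq ι] {m : ι → ℕ}
    (G : Subgroup (∀ i, Perm (Fin (m i))))
    (hG : Subgroup.pi Set.univ (fun i => alternatingGroup (Fin (m i))) ≤ G) :
    propFixVia (fun c => piCongrRight c) (G : Set (∀ i, Perm (Fin (m i)))) 0 ∈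
      Set.Icc (1 - ∏ i, max (fixedPointProportion (m i) 1) (fixedPointProportion (m i) (-1)))
        (1 - ∏ i, min (fixedPointProportion (m i) 1) (fixedPointProportion (m i) (-1))) := by
  classical
  obtain ⟨S, hS⟩ := exists_finset_sign_mem_iff hG
  have hlower := prod_mul_card_le_card_filter_pi (fun i (σ : Perm (Fin (m i))) => sign σ) S
    (fun i σ => σ ∉ derangements (Fin (m i))) _
    (fun i => le_min (fixedPointProportion_nonneg _ _) (fixedPointProportion_nonneg _ _))
    fun i ε => by
      rw [← fixedPointProportion_mul_card]
      gcongr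
      exact min_fixedPointProportion_le _ _
  have hupper := card_filter_pi_le_prod_mul_card (fun i (σ : Perm (Fin (m i))) => sign σ) S
    (fun i σ => σ ∉ derangements (Fin (m i))) _
    fun i ε => by
      rw [← fixedPointProportion_mul_card]
      gcongr
      exact fixedPointProportion_le_max _ _
  simp only [hS] at hlower hupper
  have hpos : (0 : ℝ) < #{g | g ∈ G} := Nat.cast_pos.2 (card_pos.2 ⟨1, by simp [G.one_mem]⟩)
  rw [propFixVia_piCongrRight_zero, Set.mem_Icc, sub_le_sub_iff_left, sub_le_sub_iff_left,
    div_le_iff₀ hpos, le_div_iff₀ hpos]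
  exact ⟨hupper, hlower⟩

lemma tendsto_prod_apply_atTop {ι : Type*} [Fintype ι] {u : ℕ → ℝ} {L : ℝ}
    (h : Tendsto u atTop (𝓝 L)) :
    Tendsto (fun m : ι → ℕ => ∏ i, u (m i)) atTop (𝓝 (L ^ Fintype.card ι)) := by
  have := tendsto_finsetProd (univ : Finset ι) fun i _ =>
    h.comp ((Function.monotone_eval i).tendsto_atTop_atTop fun b => ⟨fun _ => b, le_rfl⟩)
  simpa using this

theorem tendsto_delta_product_action_general (r : ℕ)
    (G : ∀ m : Fin r → ℕ, Subgroup (∀ i, Equiv.Perm (Fin (m i))))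
    (hAG : ∀ m : Fin r → ℕ,
      Subgroup.pi Set.univ (fun i => alternatingGroup (Fin (m i))) ≤ G m) :
    Filter.Tendsto
      (fun m : Fin r → ℕ =>
        propFixVia (fun c : ∀ i, Equiv.Perm (Fin (m i)) => Equiv.piCongrRight c)
          ((G m : Set (∀ i, Equiv.Perm (Fin (m i))))) 0)
      Filter.atTop (nhds (1 - (1 - Real.exp (-1)) ^ r)) := by
  have hmin := tendsto_prod_apply_atTop (ι := Fin r)
    ((tendsto_fixedPointProportion 1).min (tendsto_fixedPointProportion (-1)))
  have hmax := tendsto_prod_apply_atTop (ι := Fin r)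
    ((tendsto_fixedPointProportion 1).max (tendsto_fixedPointProportion (-1)))
  rw [min_self, Fintype.card_fin] at hmin
  rw [max_self, Fintype.card_fin] at hmax
  exact tendsto_of_tendsto_of_tendsto_of_le_of_le (hmax.const_sub 1) (hmin.const_sub 1)
    (fun m => (propFixVia_piCongrRight_zero_mem_Icc (G m) (hAG m)).1)
    (fun m => (propFixVia_piCongrRight_zero_mem_Icc (G m) (hAG m)).2)

/-- **Corollary (limit of derangement proportions for product actions).**
Fix `r ≥ 1`, and for each `r`-tuple `m` of positive integers let `G m` be a
subgroup with `A_{m 1} × ⋯ × A_{m r} ⊴ G m ≤ S_{m 1} × ⋯ × S_{m r}`, acting on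
`[m 1] × ⋯ × [m r]` via the product action.  Then
`δ(G m) → 1 - (1 - e⁻¹)^r` as `min(m 1, …, m r) → ∞`. -/
theorem tendsto_delta_product_action (r : ℕ) (hr : 1 ≤ r)
    (G : ∀ m : Fin r → ℕ, Subgroup (∀ i, Equiv.Perm (Fin (m i))))
    (hAG : ∀ m : Fin r → ℕ,
      Subgroup.pi Set.univ (fun i => alternatingGroup (Fin (m i))) ≤ G m)
    (hnormal : ∀ m : Fin r → ℕ, ∀ g ∈ G m,
      ∀ a ∈ Subgroup.pi Set.univ (fun i => alternatingGroup (Fin (m i))),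
        g * a * g⁻¹ ∈ Subgroup.pi Set.univ (fun i => alternatingGroup (Fin (m i)))) :
    Filter.Tendsto
      (fun m : Fin r → ℕ =>
        propFixVia (fun c : ∀ i, Equiv.Perm (Fin (m i)) => Equiv.piCongrRight c)
          ((G m : Set (∀ i, Equiv.Perm (Fin (m i))))) 0)
      Filter.atTop (nhds (1 - (1 - Real.exp (-1)) ^ r)) :=
  tendsto_delta_product_action_general r G hAG
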